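/- arXiv:0911.5629 — 2 statements merged into one kernel-verified Lean document; each statement's English description precedes it below -/
import Mathlib

section
/- Let p ∈ (0,1), q = 1 − p, and let θ = a/b with a ∈ ℤ, b ∈ ℕ, b ≥ 1 and |a| ≤ b. Let P be a probability measure on the space of dynamic environments ξ : ℕ × ℤ → {0,1} (with the product σ-algebra) such that the space-time shift T defined by (Tξ)(k, y) = ξ(k + 2b, y + 2a) is measure-preserving and ergodic for P. Then there exists a constant I ∈ [0, log(1/min(p,q))] such that for P-almost every ξ, lim_{k→∞} −(1/(2bk)) · log q_{2bk}^0(ξ, 2ak) = I. -/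
/-!
Write `F k ξ = -log q_{2bk}^0(ξ, 2ak)` and `T` for the space-time shift by `(2b, 2a)`. Gluing a
path from `0` to `2ak` in `ξ` to a path from `2ak` to `2a(k + l)` in the environment seen from
`(2bk, 2ak)`, which is `T^k ξ`, gives `F (k + l) ξ ≤ F k ξ + F l (T^k ξ)`: `F` is a subadditive
cocycle over `T`. A single path of length `n` already has weight at least `min(p, q)^n`, so
`0 ≤ F k ≤ 2bk log (1 / min(p, q))`. Kingman's subadditive ergodic theorem then gives a
deterministic a.e. limit of `F k / k`, and the rate is that limit divided by `2b`.

For bounded nonnegative cocycles Kingman's theorem follows from the covering argument of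
Katznelson and Weiss: the lim inf and lim sup of `F k / k` are `T`-invariant, hence a.e.
constant, and cutting `[0, L)` greedily into blocks on which `F` is already below the lim inf
bounds the lim sup by the lim inf, up to the density of the uncovered points. That density is
controlled by the upper half of Birkhoff's ergodic theorem, which is the same covering argument
integrated against the invariant measure.
-/

open Finset MeasureTheory Filter

/-- Position after `k` steps of the nearest-neighbor path started at `x`
with up/down steps given by `s`. -/
def pathPos (x : ℤ) {n : ℕ} (s : Fin n → Bool) (k : ℕ) : ℤ :=
  x + ∑ i ∈ Finset.univ.filter (fun i : Fin n => (i : ℕ) < k), (if s i then (1 : ℤ) else -1)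

/-- The quenched `n`-step transition probability `q_n^x(ξ, m)` of the random walk in the
dynamic environment `ξ : ℕ × ℤ → {0,1}` started at `x`. -/
noncomputable def quenchedProb (p : ℝ) (ξ : ℕ → ℤ → Bool) (n : ℕ) (x m : ℤ) : ℝ :=
  ∑ s ∈ Finset.univ.filter (fun s : Fin n → Bool => pathPos x s n = m),
    ∏ k : Fin n, (if ξ k (pathPos x s k) = s k then p else 1 - p)

open Topology

/-! ## Paths and their weights -/

def pathWeight (p : ℝ) (ξ : ℕ → ℤ → Bool) (x : ℤ) {n : ℕ} (s : Fin n → Bool) : ℝ :=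
  ∏ k : Fin n, if ξ k (pathPos x s k) = s k then p else 1 - p

lemma quenchedProb_eq_sum_pathWeight (p : ℝ) (ξ : ℕ → ℤ → Bool) (n : ℕ) (x m : ℤ) :
    quenchedProb p ξ n x m = ∑ s : Fin n → Bool with pathPos x s n = m, pathWeight p ξ x s :=
  rfl

@[simp]
lemma pathPos_zero (x : ℤ) {n : ℕ} (s : Fin n → Bool) : pathPos x s 0 = x := by
  simp [pathPos]

lemma pathPos_eq_add (x : ℤ) {n : ℕ} (s : Fin n → Bool) (k : ℕ) :
    pathPos x s k = x + pathPos 0 s k := by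
  simp [pathPos]

lemma pathPos_of_le (x : ℤ) {n : ℕ} (s : Fin n → Bool) {k : ℕ} (hk : n ≤ k) :
    pathPos x s k = pathPos x s n := by
  have h : ∀ i : Fin n, (i : ℕ) < k ↔ (i : ℕ) < n := fun i => by omega
  simp only [pathPos, h]

lemma pathPos_append (x : ℤ) {n m : ℕ} (s : Fin n → Bool) (t : Fin m → Bool) (k : ℕ) :
    pathPos x (Fin.append s t) k = pathPos (pathPos x s k) t (k - n) := by
  have h : ∀ j : ℕ, n + j < k ↔ j < k - n := fun j => by omega
  simp only [pathPos, Finset.sum_filter, Fin.sum_univ_add, Fin.append_left, Fin.append_right,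
    Fin.val_castAdd, Fin.val_natAdd, h]
  ring

lemma pathWeight_append (p : ℝ) (ξ : ℕ → ℤ → Bool) (x : ℤ) {n m : ℕ} (s : Fin n → Bool)
    (t : Fin m → Bool) :
    pathWeight p ξ x (Fin.append s t) =
      pathWeight p ξ x s * pathWeight p (fun k => ξ (n + k)) (pathPos x s n) t := by
  simp only [pathWeight, Fin.prod_univ_add, Fin.append_left, Fin.append_right, Fin.val_castAdd,
    Fin.val_natAdd, pathPos_append, Nat.add_sub_cancel_left,
    pathPos_of_le x s (Nat.le_add_right n _)]
  congr 1
  refine Finset.prod_congr rfl fun i _ => ?_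
  rw [Nat.sub_eq_zero_of_le i.isLt.le, pathPos_zero]

lemma pathWeight_nonneg {p : ℝ} (hp0 : 0 ≤ p) (hp1 : p ≤ 1) (ξ : ℕ → ℤ → Bool) (x : ℤ)
    {n : ℕ} (s : Fin n → Bool) : 0 ≤ pathWeight p ξ x s :=
  Finset.prod_nonneg fun k _ => by split <;> linarith

lemma pow_min_le_pathWeight {p : ℝ} (hp0 : 0 ≤ p) (hp1 : p ≤ 1) (ξ : ℕ → ℤ → Bool) (x : ℤ)
    {n : ℕ} (s : Fin n → Bool) : min p (1 - p) ^ n ≤ pathWeight p ξ x s := by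
  calc min p (1 - p) ^ n = ∏ _k : Fin n, min p (1 - p) := by simp
    _ ≤ pathWeight p ξ x s :=
      Finset.prod_le_prod (fun _ _ => le_min hp0 (by linarith)) fun k _ => by split <;> simp

lemma sum_pathWeight (p : ℝ) (ξ : ℕ → ℤ → Bool) (x : ℤ) (n : ℕ) :
    ∑ s : Fin n → Bool, pathWeight p ξ x s = 1 := by
  induction n generalizing ξ x with
  | zero => simp [pathWeight]
  | succ n ih =>
    have hstep (ξ' : ℕ → ℤ → Bool) (y : ℤ) : ∑ t : Fin 1 → Bool, pathWeight p ξ' y t = 1 := by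
      rw [← (Equiv.funUnique (Fin 1) Bool).symm.sum_comp]
      cases h : ξ' 0 y <;> simp [pathWeight, h]
    rw [← (Fin.appendEquiv n 1).sum_comp, Fintype.sum_prod_type]
    simp only [Fin.appendEquiv, Equiv.coe_fn_mk, pathWeight_append, ← Finset.mul_sum, hstep,
      mul_one, ih]

lemma quenchedProb_le_one {p : ℝ} (hp0 : 0 ≤ p) (hp1 : p ≤ 1) (ξ : ℕ → ℤ → Bool) (n : ℕ)
    (x m : ℤ) : quenchedProb p ξ n x m ≤ 1 := by
  rw [quenchedProb_eq_sum_pathWeight, ← sum_pathWeight p ξ x n]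
  exact Finset.sum_le_sum_of_subset_of_nonneg (Finset.filter_subset _ _)
    fun s _ _ => pathWeight_nonneg hp0 hp1 ξ x s

lemma pathWeight_le_quenchedProb {p : ℝ} (hp0 : 0 ≤ p) (hp1 : p ≤ 1) (ξ : ℕ → ℤ → Bool)
    (x : ℤ) {n : ℕ} (s : Fin n → Bool) :
    pathWeight p ξ x s ≤ quenchedProb p ξ n x (pathPos x s n) :=
  Finset.single_le_sum (fun s _ => pathWeight_nonneg hp0 hp1 ξ x s)
    (Finset.mem_filter.2 ⟨Finset.mem_univ s, rfl⟩)

lemma pathPos_decide_lt {n u : ℕ} (hu : u ≤ n) :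
    pathPos 0 (fun i : Fin n => decide ((i : ℕ) < u)) n = 2 * u - n := by
  rw [pathPos_of_le 0 _ le_rfl, pathPos, zero_add,
    Finset.filter_true_of_mem fun i _ => i.isLt, Fin.sum_univ_eq_sum_range
      (fun j => if decide (j < u) then (1 : ℤ) else -1) n,
    Finset.range_eq_Ico, ← Finset.sum_Ico_consecutive _ (Nat.zero_le u) hu,
    Finset.sum_congr rfl fun i hi => if_pos (decide_eq_true (Finset.mem_Ico.1 hi).2),
    Finset.sum_congr rfl fun i hi => if_neg (by simpa using (Finset.mem_Ico.1 hi).1)]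
  simp only [Finset.sum_const, Nat.card_Ico, Nat.sub_zero, nsmul_eq_mul]
  push_cast [Nat.cast_sub hu]
  ring

lemma pow_min_le_quenchedProb {p : ℝ} (hp0 : 0 ≤ p) (hp1 : p ≤ 1) (ξ : ℕ → ℤ → Bool)
    {n u : ℕ} (hu : u ≤ n) : min p (1 - p) ^ n ≤ quenchedProb p ξ n 0 (2 * u - n) := by
  rw [← pathPos_decide_lt hu]
  exact (pow_min_le_pathWeight hp0 hp1 ξ 0 _).trans (pathWeight_le_quenchedProb hp0 hp1 ξ 0 _)

lemma quenchedProb_mul_le {p : ℝ} (hp0 : 0 ≤ p) (hp1 : p ≤ 1) (ξ : ℕ → ℤ → Bool) (n m : ℕ)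
    (x y z : ℤ) :
    quenchedProb p ξ n x y * quenchedProb p (fun k => ξ (n + k)) m y z ≤
      quenchedProb p ξ (n + m) x z := by
  simp only [quenchedProb_eq_sum_pathWeight, Finset.sum_filter, Finset.sum_mul_sum]
  rw [← (Fin.appendEquiv n m).sum_comp, Fintype.sum_prod_type]
  gcongr with s _ t _
  simp only [Fin.appendEquiv, Equiv.coe_fn_mk, pathPos_append, pathWeight_append,
    Nat.add_sub_cancel_left, pathPos_of_le x s (Nat.le_add_right n m)]
  have hw := mul_nonneg (pathWeight_nonneg hp0 hp1 ξ x s)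
    (pathWeight_nonneg hp0 hp1 (fun k => ξ (n + k)) (pathPos x s n) t)
  split_ifs with hy hz hyz <;> subst_vars <;> simp_all

lemma quenchedProb_eq_translate (p : ℝ) (ξ : ℕ → ℤ → Bool) (n : ℕ) (x m : ℤ) :
    quenchedProb p ξ n x m = quenchedProb p (fun k w => ξ k (w + x)) n 0 (m - x) := by
  simp only [quenchedProb_eq_sum_pathWeight, pathWeight, pathPos_eq_add x, add_comm x,
    eq_sub_iff_add_eq]

lemma quenchedProb_mul_shift_le {p : ℝ} (hp0 : 0 ≤ p) (hp1 : p ≤ 1) (ξ : ℕ → ℤ → Bool)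
    (n m : ℕ) (y z : ℤ) :
    quenchedProb p ξ n 0 y * quenchedProb p (fun k w => ξ (k + n) (w + y)) m 0 z ≤
      quenchedProb p ξ (n + m) 0 (y + z) := by
  have h := quenchedProb_mul_le hp0 hp1 ξ n m 0 y (y + z)
  rw [quenchedProb_eq_translate p _ m y, add_sub_cancel_left] at h
  simpa only [Nat.add_comm n] using h

lemma measurable_quenchedProb (p : ℝ) (n : ℕ) (x m : ℤ) :
    Measurable fun ξ : ℕ → ℤ → Bool => quenchedProb p ξ n x m :=
  Finset.measurable_sum _ fun s _ => Finset.measurable_prod _ fun k _ =>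
    (measurable_from_top (f := fun v : Bool => if v = s k then p else 1 - p)).comp
      ((measurable_pi_apply _).comp (measurable_pi_apply _))

/-! ## Subadditive cocycles and ergodic averages -/

def IsSubadditiveCocycle {α : Type*} (T : α → α) (F : ℕ → α → ℝ) : Prop :=
  ∀ k l x, F (k + l) x ≤ F k x + F l (T^[k] x)

section Covering

variable {α : Type*} {T : α → α}

lemma birkhoffSum_nonneg {u : α → ℝ} (hu : ∀ x, 0 ≤ u x) (n : ℕ) (x : α) :
    0 ≤ birkhoffSum T u n x :=
  Finset.sum_nonneg fun _ _ => hu _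

lemma birkhoffSum_mem_Icc {u : α → ℝ} {M : ℝ} (hu : ∀ x, u x ∈ Set.Icc 0 M) (n : ℕ) (x : α) :
    birkhoffSum T u n x ∈ Set.Icc 0 (n * M) := by
  refine ⟨birkhoffSum_nonneg (fun y => (hu y).1) n x, ?_⟩
  calc birkhoffSum T u n x ≤ ∑ _k ∈ Finset.range n, M :=
        Finset.sum_le_sum fun k _ => (hu _).2
    _ = n * M := by simp

/-- Starting from `x`, cut off a block of length `n ≤ N` with `F n ≤ n β` if the current point
is in `G`, and a single step otherwise; the final stretch of length at most `N` costs `C N`. -/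
theorem IsSubadditiveCocycle.le_add_birkhoffSum {F : ℕ → α → ℝ} {C β : ℝ}
    (hF : IsSubadditiveCocycle T F) (hFC : ∀ k x, F k x ≤ k * C) (hC : 0 ≤ C) (hβ : 0 ≤ β)
    {G : Set α} {N : ℕ} (hG : ∀ y ∈ G, ∃ n, 1 ≤ n ∧ n ≤ N ∧ F n y ≤ n * β) (L : ℕ) (x : α) :
    F L x ≤ β * L + C * birkhoffSum T (Gᶜ.indicator 1) L x + C * N := by
  have hS := birkhoffSum_nonneg (T := T) (u := Gᶜ.indicator 1)
    fun y => Set.indicator_nonneg (fun _ _ => zero_le_one) y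
  induction L using Nat.strong_induction_on generalizing x with
  | _ L ih =>
  rcases le_or_gt L N with hLN | hNL
  · have : (L : ℝ) ≤ N := by exact_mod_cast hLN
    nlinarith [hFC L x, hS L x]
  · obtain ⟨n, hn1, hnL, hn⟩ :
        ∃ n, 1 ≤ n ∧ n ≤ L ∧ F n x ≤ n * β + C * birkhoffSum T (Gᶜ.indicator 1) n x := by
      by_cases hx : x ∈ G
      · obtain ⟨n, h1, h2, h3⟩ := hG x hx
        exact ⟨n, h1, by omega, by nlinarith [hS n x]⟩
      · refine ⟨1, le_rfl, by omega, ?_⟩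
        have := hFC 1 x
        simp only [birkhoffSum_one, Set.indicator_of_mem (Set.mem_compl hx), Pi.one_apply,
          Nat.cast_one] at this ⊢
        linarith
    obtain ⟨m, rfl⟩ := Nat.exists_eq_add_of_le hnL
    have := ih m (by omega) (T^[n] x)
    rw [birkhoffSum_add]
    push_cast
    nlinarith [hF n m x]

end Covering

lemma limsup_le_limsup_of_le_add {c e d : ℕ → ℝ} {A B : ℝ} (hc : ∀ n, B ≤ c n)
    (he : ∀ n, e n ≤ A) (h : ∀ᶠ n in atTop, c n ≤ e n + d n)
    (hd : Tendsto d atTop (𝓝 0)) : limsup c atTop ≤ limsup e atTop := by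
  refine le_of_forall_pos_le_add fun ε hε => limsup_le_of_le
    (isCoboundedUnder_le_of_le atTop hc) ?_
  filter_upwards [h, eventually_lt_of_limsup_lt (lt_add_of_pos_right _ (half_pos hε))
    (isBoundedUnder_of ⟨A, he⟩), hd.eventually (gt_mem_nhds (half_pos hε))] with n h1 h2 h3
  linarith

lemma liminf_le_liminf_of_le_add {c e d : ℕ → ℝ} {A B : ℝ} (hc : ∀ n, B ≤ c n)
    (he : ∀ n, e n ≤ A) (h : ∀ᶠ n in atTop, c n ≤ e n + d n)
    (hd : Tendsto d atTop (𝓝 0)) : liminf c atTop ≤ liminf e atTop := by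
  refine le_of_forall_pos_le_add fun ε hε => liminf_le_of_frequently_le ?_
    (isBoundedUnder_of ⟨B, hc⟩)
  refine ((frequently_lt_of_liminf_lt (isCoboundedUnder_ge_of_le atTop he)
    (lt_add_of_pos_right _ (half_pos hε))).and_eventually
    (h.and (hd.eventually (gt_mem_nhds (half_pos hε))))).mono fun n ⟨h1, h2, h3⟩ => ?_
  linarith

lemma limsup_mem_Icc {f : ℕ → ℝ} {a b : ℝ} (hf : ∀ n, f n ∈ Set.Icc a b) :
    limsup f atTop ∈ Set.Icc a b :=
  ⟨le_limsup_of_frequently_le (Frequently.of_forall fun n => (hf n).1)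
      (isBoundedUnder_of ⟨b, fun n => (hf n).2⟩),
    limsup_le_of_le (isCoboundedUnder_le_of_le atTop fun n => (hf n).1)
      (Eventually.of_forall fun n => (hf n).2)⟩

lemma liminf_mem_Icc {f : ℕ → ℝ} {a b : ℝ} (hf : ∀ n, f n ∈ Set.Icc a b) :
    liminf f atTop ∈ Set.Icc a b :=
  ⟨le_liminf_of_le (isCoboundedUnder_ge_of_le atTop fun n => (hf n).2)
      (Eventually.of_forall fun n => (hf n).1),
    liminf_le_of_frequently_le (Frequently.of_forall fun n => (hf n).2)
      (isBoundedUnder_of ⟨a, fun n => (hf n).1⟩)⟩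

lemma le_of_forall_nat_mul_sub_le {a b K : ℝ} (h : ∀ L : ℕ, L * a - K ≤ L * b) : a ≤ b := by
  by_contra! hab
  obtain ⟨L, hL⟩ := exists_nat_gt (K / (a - b))
  rw [div_lt_iff₀ (sub_pos.2 hab)] at hL
  linarith [h L]

section Averages

variable {a b : ℕ → ℝ} {C : ℝ}

lemma nonneg_of_mem_Icc_mul (ha : ∀ n : ℕ, a n ∈ Set.Icc 0 (n * C)) : 0 ≤ C := by
  simpa using (ha 1).1.trans (ha 1).2

lemma div_mem_Icc_of_mem_Icc (ha : ∀ n : ℕ, a n ∈ Set.Icc 0 (n * C)) (n : ℕ) :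
    a n / n ∈ Set.Icc 0 C := by
  rcases Nat.eq_zero_or_pos n with rfl | hn
  · simpa using nonneg_of_mem_Icc_mul ha
  · have hn' : (0 : ℝ) < n := Nat.cast_pos.2 hn
    exact ⟨div_nonneg (ha n).1 hn'.le, (div_le_iff₀ hn').2 (by linarith [(ha n).2])⟩

lemma div_succ_le_div_add (ha : ∀ n : ℕ, a n ∈ Set.Icc 0 (n * C))
    (hb : ∀ n : ℕ, b n ∈ Set.Icc 0 (n * C)) (hab : ∀ n, a (n + 1) ≤ C + b n) :
    ∀ᶠ n : ℕ in atTop, a (n + 1) / ↑(n + 1) ≤ b n / n + C / n := by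
  filter_upwards [eventually_ge_atTop 1] with n hn
  have hn' : (1 : ℝ) ≤ n := Nat.one_le_cast.2 hn
  have hC := nonneg_of_mem_Icc_mul ha
  rw [← add_div, Nat.cast_succ, div_le_div_iff₀ (by linarith) (by linarith)]
  nlinarith [hab n, (hb n).1, (ha (n + 1)).1]

lemma limsup_div_le_limsup_div (ha : ∀ n : ℕ, a n ∈ Set.Icc 0 (n * C))
    (hb : ∀ n : ℕ, b n ∈ Set.Icc 0 (n * C)) (hab : ∀ n, a (n + 1) ≤ C + b n) :
    limsup (fun n => a n / n) atTop ≤ limsup (fun n => b n / n) atTop := by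
  rw [← limsup_nat_add _ 1]
  exact limsup_le_limsup_of_le_add (fun n => (div_mem_Icc_of_mem_Icc ha _).1)
    (fun n => (div_mem_Icc_of_mem_Icc hb n).2) (div_succ_le_div_add ha hb hab)
    (tendsto_const_div_atTop_nhds_zero_nat C)

lemma liminf_div_le_liminf_div (ha : ∀ n : ℕ, a n ∈ Set.Icc 0 (n * C))
    (hb : ∀ n : ℕ, b n ∈ Set.Icc 0 (n * C)) (hab : ∀ n, a (n + 1) ≤ C + b n) :
    liminf (fun n => a n / n) atTop ≤ liminf (fun n => b n / n) atTop := by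
  rw [← liminf_nat_add _ 1]
  exact liminf_le_liminf_of_le_add (fun n => (div_mem_Icc_of_mem_Icc ha _).1)
    (fun n => (div_mem_Icc_of_mem_Icc hb n).2) (div_succ_le_div_add ha hb hab)
    (tendsto_const_div_atTop_nhds_zero_nat C)

end Averages

section Ergodic

variable {α : Type*} [MeasurableSpace α] {μ : Measure α} {T : α → α}

lemma MeasureTheory.MeasurePreserving.integral_comp_of_integrable
    (hT : MeasurePreserving T μ μ) {g : α → ℝ} (hg : Integrable g μ) :
    ∫ x, g (T x) ∂μ = ∫ x, g x ∂μ := by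
  have hg' : AEStronglyMeasurable g (μ.map T) := by
    rw [hT.map_eq]
    exact hg.aestronglyMeasurable
  rw [← integral_map hT.measurable.aemeasurable hg', hT.map_eq]

lemma MeasureTheory.MeasurePreserving.integrable_birkhoffSum (hT : MeasurePreserving T μ μ)
    {g : α → ℝ} (hg : Integrable g μ) (n : ℕ) : Integrable (birkhoffSum T g n) μ :=
  integrable_finsetSum _ fun k _ => (hT.iterate k).integrable_comp_of_integrable hg

lemma MeasureTheory.MeasurePreserving.integral_birkhoffSum (hT : MeasurePreserving T μ μ)
    {g : α → ℝ} (hg : Integrable g μ) (n : ℕ) :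
    ∫ x, birkhoffSum T g n x ∂μ = n * ∫ x, g x ∂μ := by
  have hk (k : ℕ) : ∫ x, g (T^[k] x) ∂μ = ∫ x, g x ∂μ :=
    (hT.iterate k).integral_comp_of_integrable hg
  simp only [birkhoffSum]
  rw [integral_finsetSum (f := fun k x => g (T^[k] x)) _
    fun k _ => (hT.iterate k).integrable_comp_of_integrable hg]
  simp [hk]

lemma measurable_birkhoffSum (hT : Measurable T) {u : α → ℝ} (hu : Measurable u) (n : ℕ) :
    Measurable (birkhoffSum T u n) :=
  Finset.measurable_sum _ fun k _ => hu.comp (hT.iterate k)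

lemma Ergodic.ae_eq_const_of_le_comp [IsFiniteMeasure μ] (hT : Ergodic T μ) {φ : α → ℝ}
    (hφ : Measurable φ) {a b : ℝ} (hab : ∀ x, φ x ∈ Set.Icc a b)
    (hle : ∀ x, φ x ≤ φ (T x)) : ∃ c, φ =ᵐ[μ] fun _ => c := by
  have hint : Integrable φ μ := Integrable.of_mem_Icc a b hφ.aemeasurable (ae_of_all _ hab)
  have hintT : Integrable (fun x => φ (T x)) μ :=
    hT.toMeasurePreserving.integrable_comp_of_integrable hint
  have hzero : (fun x => φ (T x) - φ x) =ᵐ[μ] 0 := by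
    rw [← integral_eq_zero_iff_of_nonneg (fun x => sub_nonneg.2 (hle x)) (hintT.sub hint),
      integral_sub hintT hint, hT.toMeasurePreserving.integral_comp_of_integrable hint, sub_self]
  exact hT.ae_eq_const_of_ae_eq_comp₀ hφ.nullMeasurable
    (hzero.mono fun x hx => sub_eq_zero.1 hx)

lemma measurableSet_accumulate {s : ℕ → Set α} (hs : ∀ n, MeasurableSet (s n)) (N : ℕ) :
    MeasurableSet (Set.accumulate s N) := by
  rw [Set.accumulate_def]
  exact MeasurableSet.iUnion fun n => MeasurableSet.iUnion fun _ => hs n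

variable [IsProbabilityMeasure μ]

lemma tendsto_measureReal_compl_accumulate {s : ℕ → Set α} (hs : ∀ n, MeasurableSet (s n))
    (h : ∀ᵐ x ∂μ, ∃ n, x ∈ s n) :
    Tendsto (fun N => μ.real (Set.accumulate s N)ᶜ) atTop (𝓝 0) := by
  have hU : μ.real (⋃ n, s n) = 1 := by
    rw [measureReal_def, (prob_compl_eq_zero_iff (MeasurableSet.iUnion hs)).1, ENNReal.toReal_one]
    rw [Set.compl_iUnion]
    simpa [ae_iff, Set.iInter_ofPred, Set.compl_def] using h
  have hlim : Tendsto (fun N => μ.real (Set.accumulate s N)) atTop (𝓝 1) :=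
    hU ▸ (ENNReal.tendsto_toReal (measure_ne_top μ _)).comp tendsto_measure_iUnion_accumulate
  simpa [measureReal_compl (measurableSet_accumulate hs _)] using
    (tendsto_const_nhds (x := (1 : ℝ))).sub hlim

section BoundedAverages

variable {G : ℕ → α → ℝ} {C : ℝ}

lemma Ergodic.exists_ae_limsup_div_eq (hT : Ergodic T μ) (hGm : ∀ n, Measurable (G n))
    (hG : ∀ (n : ℕ) x, G n x ∈ Set.Icc 0 (n * C))
    (hstep : ∀ n x, G (n + 1) x ≤ C + G n (T x)) :
    ∃ c, ∀ᵐ x ∂μ, limsup (fun n => G n x / n) atTop = c :=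
  hT.ae_eq_const_of_le_comp (Measurable.limsup fun n => (hGm n).div_const _)
    (fun x => limsup_mem_Icc (div_mem_Icc_of_mem_Icc (hG · x)))
    fun x => limsup_div_le_limsup_div (hG · x) (hG · (T x)) (hstep · x)

lemma Ergodic.exists_ae_liminf_div_eq (hT : Ergodic T μ) (hGm : ∀ n, Measurable (G n))
    (hG : ∀ (n : ℕ) x, G n x ∈ Set.Icc 0 (n * C))
    (hstep : ∀ n x, G (n + 1) x ≤ C + G n (T x)) :
    ∃ c, ∀ᵐ x ∂μ, liminf (fun n => G n x / n) atTop = c :=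
  hT.ae_eq_const_of_le_comp (Measurable.liminf fun n => (hGm n).div_const _)
    (fun x => liminf_mem_Icc (div_mem_Icc_of_mem_Icc (hG · x)))
    fun x => liminf_div_le_liminf_div (hG · x) (hG · (T x)) (hstep · x)

end BoundedAverages

lemma MeasureTheory.MeasurePreserving.le_integral_add_measureReal_compl
    (hT : MeasurePreserving T μ μ) {u : α → ℝ} (hu : Measurable u) {M : ℝ}
    (hu0 : ∀ x, u x ∈ Set.Icc 0 M) {c : ℝ} (hcM : c ≤ M) {G : Set α} (hG : MeasurableSet G)
    {N : ℕ} (hcov : ∀ y ∈ G, ∃ n, 1 ≤ n ∧ n ≤ N ∧ n * c ≤ birkhoffSum T u n y) :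
    c ≤ ∫ x, u x ∂μ + M * μ.real Gᶜ := by
  obtain ⟨x₀⟩ := nonempty_of_isProbabilityMeasure μ
  have hM : 0 ≤ M := (hu0 x₀).1.trans (hu0 x₀).2
  have huint : Integrable u μ := Integrable.of_mem_Icc 0 M hu.aemeasurable (ae_of_all _ hu0)
  have hind : Integrable (Gᶜ.indicator (1 : α → ℝ)) μ := (integrable_const 1).indicator hG.compl
  set v : α → ℝ := fun x => u x + M * Gᶜ.indicator 1 x with hv
  have hvint : Integrable v μ := huint.add (hind.const_mul M)
  -- the deficit `n M - S_n u` is an additive cocycle, so the covering lemma applies to it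
  have hcocycle : IsSubadditiveCocycle T fun n x => n * M - birkhoffSum T u n x :=
    fun k l x => by simp only [birkhoffSum_add, Nat.cast_add]; linarith
  have hpt (L : ℕ) (x : α) : L * c - M * N ≤ birkhoffSum T v L x := by
    have h := hcocycle.le_add_birkhoffSum (β := M - c)
      (fun k x => by linarith [(birkhoffSum_mem_Icc (T := T) hu0 k x).1]) hM (sub_nonneg.2 hcM)
      (fun y hy => by
        obtain ⟨n, h1, h2, h3⟩ := hcov y hy
        exact ⟨n, h1, h2, by linarith⟩) L x
    have hsplit : birkhoffSum T v L x =
        birkhoffSum T u L x + M * birkhoffSum T (Gᶜ.indicator 1) L x := by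
      simp [hv, birkhoffSum, Finset.sum_add_distrib, Finset.mul_sum]
    rw [hsplit]
    linarith
  have hvv : ∫ x, v x ∂μ = ∫ x, u x ∂μ + M * μ.real Gᶜ := by
    rw [hv, integral_add huint (hind.const_mul M), integral_const_mul,
      integral_indicator_one hG.compl]
  refine le_of_forall_nat_mul_sub_le (K := M * N) fun L => ?_
  have h := integral_mono (integrable_const _) (hT.integrable_birkhoffSum hvint L) (hpt L)
  rwa [integral_const, hT.integral_birkhoffSum hvint, hvv, probReal_univ, one_smul] at h

theorem Ergodic.ae_limsup_birkhoffSum_div_le (hT : Ergodic T μ) {u : α → ℝ}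
    (hu : Measurable u) {M : ℝ} (hu0 : ∀ x, u x ∈ Set.Icc 0 M) :
    ∀ᵐ x ∂μ, limsup (fun n => birkhoffSum T u n x / n) atTop ≤ ∫ x, u x ∂μ := by
  have hS := birkhoffSum_mem_Icc (T := T) hu0
  have hSm := measurable_birkhoffSum hT.toMeasurePreserving.measurable hu
  obtain ⟨c, hc⟩ := hT.exists_ae_limsup_div_eq hSm hS
    fun n x => by rw [birkhoffSum_succ']; linarith [(hu0 x).2]
  suffices c ≤ ∫ x, u x ∂μ from hc.mono fun x hx => hx.trans_le this
  obtain ⟨x₀, hx₀⟩ := hc.exists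
  have hcM : c ≤ M := hx₀ ▸ (limsup_mem_Icc (div_mem_Icc_of_mem_Icc (hS · x₀))).2
  refine le_of_forall_pos_le_add fun ε hε => ?_
  set s : ℕ → Set α := fun n => {y | 1 ≤ n ∧ n * (c - ε) ≤ birkhoffSum T u n y}
  have hs (n : ℕ) : MeasurableSet (s n) :=
    (MeasurableSet.const (1 ≤ n)).inter (measurableSet_le measurable_const (hSm n))
  have hcover : ∀ᵐ x ∂μ, ∃ n, x ∈ s n := hc.mono fun x hx => by
    obtain ⟨n, hn, h1⟩ := ((frequently_lt_of_lt_limsup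
      (isCoboundedUnder_le_of_le atTop fun n => (div_mem_Icc_of_mem_Icc (hS · x) n).1)
      (by rw [hx]; exact sub_lt_self c hε)).and_eventually (eventually_ge_atTop 1)).exists
    rw [lt_div_iff₀ (by exact_mod_cast h1)] at hn
    exact ⟨n, h1, by linarith⟩
  have key (N : ℕ) : c - ε ≤ ∫ x, u x ∂μ + M * μ.real (Set.accumulate s N)ᶜ :=
    hT.toMeasurePreserving.le_integral_add_measureReal_compl hu hu0 (by linarith)
      (measurableSet_accumulate hs N) fun y hy => by
        obtain ⟨n, hnN, h1, h2⟩ := Set.mem_accumulate.1 hy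
        exact ⟨n, h1, hnN, h2⟩
  have hlim := ((tendsto_measureReal_compl_accumulate hs hcover).const_mul M).const_add
    (∫ x, u x ∂μ)
  rw [mul_zero, add_zero] at hlim
  linarith [ge_of_tendsto' hlim key]

end Ergodic

/-! ## Kingman's theorem for bounded cocycles -/

section Kingman

variable {α : Type*} [MeasurableSpace α] {μ : Measure α} [IsProbabilityMeasure μ] {T : α → α}
  {F : ℕ → α → ℝ} {C : ℝ}

lemma Ergodic.ae_limsup_div_le_of_covering (hT : Ergodic T μ) (hF : IsSubadditiveCocycle T F)
    (hFC : ∀ (k : ℕ) x, F k x ∈ Set.Icc 0 (k * C)) {β : ℝ} (hβ : 0 ≤ β) {G : Set α}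
    (hG : MeasurableSet G) {N : ℕ} (hcov : ∀ y ∈ G, ∃ n, 1 ≤ n ∧ n ≤ N ∧ F n y ≤ n * β) :
    ∀ᵐ x ∂μ, limsup (fun n => F n x / n) atTop ≤ β + C * μ.real Gᶜ := by
  have hind (x : α) : Gᶜ.indicator (1 : α → ℝ) x ∈ Set.Icc 0 1 := by
    by_cases hx : x ∈ Gᶜ <;> simp [hx]
  filter_upwards [hT.ae_limsup_birkhoffSum_div_le (measurable_one.indicator hG.compl) hind]
    with x hx
  rw [integral_indicator_one hG.compl] at hx
  have hC := nonneg_of_mem_Icc_mul (hFC · x)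
  set e : ℕ → ℝ := fun n => birkhoffSum T (Gᶜ.indicator 1) n x / n with he_def
  have he : ∀ n, e n ∈ Set.Icc 0 1 :=
    div_mem_Icc_of_mem_Icc fun n => birkhoffSum_mem_Icc hind n x
  have hcover : ∀ᶠ n : ℕ in atTop, F n x / n ≤ β + C * e n + C * N / n := by
    filter_upwards [eventually_ge_atTop 1] with n hn
    have hn' : (0 : ℝ) < n := by exact_mod_cast hn
    rw [div_le_iff₀ hn']
    calc F n x ≤ β * n + C * birkhoffSum T (Gᶜ.indicator 1) n x + C * N :=
          hF.le_add_birkhoffSum (fun k x => (hFC k x).2) hC hβ hcov n x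
      _ = (β + C * e n + C * N / n) * n := by simp only [he_def]; field_simp
  calc limsup (fun n => F n x / n) atTop ≤ limsup (fun n => β + C * e n) atTop :=
        limsup_le_limsup_of_le_add (A := β + C) (fun n => (div_mem_Icc_of_mem_Icc (hFC · x) n).1)
          (fun n => by linarith [mul_le_mul_of_nonneg_left (he n).2 hC]) hcover
          (tendsto_const_div_atTop_nhds_zero_nat _)
    _ = β + C * limsup e atTop :=
        (Monotone.map_limsup_of_continuousAt (f := fun t => β + C * t)
          (fun a b h => add_le_add_right (mul_le_mul_of_nonneg_left h hC) β) e
          (continuous_const.add (continuous_const.mul continuous_id)).continuousAt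
          (isBoundedUnder_of ⟨1, fun n => (he n).2⟩)
          (isCoboundedUnder_le_of_le atTop fun n => (he n).1)).symm
    _ ≤ β + C * μ.real Gᶜ := add_le_add_right (mul_le_mul_of_nonneg_left hx hC) β

lemma Ergodic.le_of_ae_limsup_div_eq_of_ae_liminf_div_eq (hT : Ergodic T μ)
    (hF : IsSubadditiveCocycle T F) (hFm : ∀ k, Measurable (F k))
    (hFC : ∀ (k : ℕ) x, F k x ∈ Set.Icc 0 (k * C)) {lc gc : ℝ}
    (hlc : ∀ᵐ x ∂μ, liminf (fun n => F n x / n) atTop = lc)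
    (hgc : ∀ᵐ x ∂μ, limsup (fun n => F n x / n) atTop = gc) : gc ≤ lc := by
  obtain ⟨x₀, hx₀⟩ := hlc.exists
  have hlc0 : 0 ≤ lc := hx₀ ▸ (liminf_mem_Icc (div_mem_Icc_of_mem_Icc (hFC · x₀))).1
  refine le_of_forall_pos_le_add fun ε hε => ?_
  set s : ℕ → Set α := fun n => {y | 1 ≤ n ∧ F n y ≤ n * (lc + ε)}
  have hs (n : ℕ) : MeasurableSet (s n) :=
    (MeasurableSet.const (1 ≤ n)).inter (measurableSet_le (hFm n) measurable_const)
  have hcover : ∀ᵐ x ∂μ, ∃ n, x ∈ s n := hlc.mono fun x hx => by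
    obtain ⟨n, hn, h1⟩ := ((frequently_lt_of_liminf_lt
      (isCoboundedUnder_ge_of_le atTop fun n => (div_mem_Icc_of_mem_Icc (hFC · x) n).2)
      (by rw [hx]; exact lt_add_of_pos_right lc hε)).and_eventually
        (eventually_ge_atTop 1)).exists
    rw [div_lt_iff₀ (by exact_mod_cast h1)] at hn
    exact ⟨n, h1, by linarith⟩
  have key (N : ℕ) : gc ≤ lc + ε + C * μ.real (Set.accumulate s N)ᶜ := by
    obtain ⟨x, hxg, hx⟩ := (hgc.and (hT.ae_limsup_div_le_of_covering hF hFC (β := lc + ε)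
      (by linarith) (measurableSet_accumulate hs N) fun y hy => by
        obtain ⟨n, hnN, h1, h2⟩ := Set.mem_accumulate.1 hy
        exact ⟨n, h1, hnN, h2⟩)).exists
    exact hxg ▸ hx
  have hlim := ((tendsto_measureReal_compl_accumulate hs hcover).const_mul C).const_add (lc + ε)
  rw [mul_zero, add_zero] at hlim
  exact ge_of_tendsto' hlim key

theorem Ergodic.exists_ae_tendsto_div_of_isSubadditiveCocycle (hT : Ergodic T μ)
    (hF : IsSubadditiveCocycle T F) (hFm : ∀ k, Measurable (F k))
    (hFC : ∀ (k : ℕ) x, F k x ∈ Set.Icc 0 (k * C)) :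
    ∃ Λ ∈ Set.Icc 0 C, ∀ᵐ x ∂μ, Tendsto (fun k => F k x / k) atTop (𝓝 Λ) := by
  have hA (x : α) (n : ℕ) : F n x / n ∈ Set.Icc 0 C := div_mem_Icc_of_mem_Icc (hFC · x) n
  have hstep (n : ℕ) (x : α) : F (n + 1) x ≤ C + F n (T x) := by
    have h := hF 1 n x
    have h1 := (hFC 1 x).2
    rw [Nat.add_comm 1 n, Function.iterate_one] at h
    rw [Nat.cast_one, one_mul] at h1
    linarith
  obtain ⟨lc, hlc⟩ := hT.exists_ae_liminf_div_eq hFm hFC hstep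
  obtain ⟨gc, hgc⟩ := hT.exists_ae_limsup_div_eq hFm hFC hstep
  have hgl := hT.le_of_ae_limsup_div_eq_of_ae_liminf_div_eq hF hFm hFC hlc hgc
  obtain ⟨x₀, hl₀, hg₀⟩ := (hlc.and hgc).exists
  have hlg : lc ≤ gc := hl₀ ▸ hg₀ ▸ liminf_le_limsup
    (isBoundedUnder_of ⟨C, fun n => (hA x₀ n).2⟩) (isBoundedUnder_of ⟨0, fun n => (hA x₀ n).1⟩)
  refine ⟨lc, hl₀ ▸ liminf_mem_Icc (hA x₀), ?_⟩
  filter_upwards [hlc, hgc] with x hl hg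
  exact tendsto_of_liminf_eq_limsup hl (hg.trans (le_antisymm hgl hlg))
    (isBoundedUnder_of ⟨C, fun n => (hA x n).2⟩) (isBoundedUnder_of ⟨0, fun n => (hA x n).1⟩)

end Kingman

/-! ## The quenched rate -/

def spaceTimeShift (a : ℤ) (b : ℕ) (ξ : ℕ → ℤ → Bool) : ℕ → ℤ → Bool :=
  fun k y => ξ (k + 2 * b) (y + 2 * a)

lemma iterate_spaceTimeShift (a : ℤ) (b j : ℕ) (ξ : ℕ → ℤ → Bool) :
    (spaceTimeShift a b)^[j] ξ = fun k y => ξ (k + 2 * b * j) (y + 2 * a * j) := by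
  induction j generalizing ξ with
  | zero => simp
  | succ j ih =>
    rw [Function.iterate_succ_apply, ih]
    funext k y
    simp only [spaceTimeShift]
    congr 1 <;> push_cast <;> ring

noncomputable def quenchedCost (p : ℝ) (a : ℤ) (b k : ℕ) (ξ : ℕ → ℤ → Bool) : ℝ :=
  -Real.log (quenchedProb p ξ (2 * b * k) 0 (2 * a * k))

lemma pow_min_le_quenchedProb_diag {p : ℝ} (hp0 : 0 ≤ p) (hp1 : p ≤ 1) {a : ℤ} {b : ℕ}
    (ha : |a| ≤ b) (k : ℕ) (ξ : ℕ → ℤ → Bool) :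
    min p (1 - p) ^ (2 * b * k) ≤ quenchedProb p ξ (2 * b * k) 0 (2 * a * k) := by
  obtain ⟨hab, hba⟩ := abs_le.1 ha
  have h := pow_min_le_quenchedProb hp0 hp1 ξ (n := 2 * b * k) (u := (a + b).toNat * k)
    (Nat.mul_le_mul_right k (by omega))
  convert h using 2
  push_cast [Int.toNat_of_nonneg (by omega : 0 ≤ a + b)]
  ring

lemma quenchedCost_mem_Icc {p : ℝ} (hp0 : 0 < p) (hp1 : p < 1) {a : ℤ} {b : ℕ}
    (ha : |a| ≤ b) (k : ℕ) (ξ : ℕ → ℤ → Bool) :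
    quenchedCost p a b k ξ ∈ Set.Icc 0 (k * (2 * b * Real.log (1 / min p (1 - p)))) := by
  have hm : 0 < min p (1 - p) := lt_min hp0 (by linarith)
  have hlow := pow_min_le_quenchedProb_diag hp0.le hp1.le ha k ξ
  have hq := (pow_pos hm _).trans_le hlow
  refine ⟨neg_nonneg.2 (Real.log_nonpos hq.le (quenchedProb_le_one hp0.le hp1.le ξ _ _ _)), ?_⟩
  have h := Real.log_le_log (pow_pos hm _) hlow
  rw [Real.log_pow, one_div, Real.log_inv] at *
  push_cast at h
  rw [quenchedCost]
  linarith

lemma measurable_quenchedCost (p : ℝ) (a : ℤ) (b k : ℕ) : Measurable (quenchedCost p a b k) :=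
  (Real.measurable_log.comp (measurable_quenchedProb p _ _ _)).neg

lemma isSubadditiveCocycle_quenchedCost {p : ℝ} (hp0 : 0 < p) (hp1 : p < 1) {a : ℤ} {b : ℕ}
    (ha : |a| ≤ b) : IsSubadditiveCocycle (spaceTimeShift a b) (quenchedCost p a b) := by
  intro k l ξ
  have hm : 0 < min p (1 - p) := lt_min hp0 (by linarith)
  have hpos (k : ℕ) (ξ : ℕ → ℤ → Bool) : 0 < quenchedProb p ξ (2 * b * k) 0 (2 * a * k) :=
    (pow_pos hm _).trans_le (pow_min_le_quenchedProb_diag hp0.le hp1.le ha k ξ)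
  have h := quenchedProb_mul_shift_le hp0.le hp1.le ξ (2 * b * k) (2 * b * l) (2 * a * k)
    (2 * a * l)
  rw [← iterate_spaceTimeShift, ← mul_add, ← mul_add] at h
  have h' := Real.log_le_log (mul_pos (hpos k ξ) (hpos l _)) h
  rw [Real.log_mul (hpos k ξ).ne' (hpos l _).ne'] at h'
  simp only [quenchedCost]
  push_cast
  linarith

theorem quenched_rate_exists_general (p : ℝ) (hp0 : 0 < p) (hp1 : p < 1)
    (a : ℤ) (b : ℕ) (ha : |a| ≤ (b : ℤ))
    (P : Measure (ℕ → ℤ → Bool)) [IsProbabilityMeasure P]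
    (hErg : Ergodic (fun ξ (k : ℕ) (y : ℤ) => ξ (k + 2 * b) (y + 2 * a)) P) :
    ∃ I ∈ Set.Icc (0 : ℝ) (Real.log (1 / min p (1 - p))),
      ∀ᵐ ξ ∂P,
        Tendsto
          (fun k : ℕ =>
            -(1 / (2 * (b : ℝ) * k)) * Real.log (quenchedProb p ξ (2 * b * k) 0 (2 * a * k)))
          atTop (nhds I) := by
  obtain ⟨Λ, ⟨hΛ0, hΛC⟩, hae⟩ := Ergodic.exists_ae_tendsto_div_of_isSubadditiveCocycle
    (T := spaceTimeShift a b) hErg (isSubadditiveCocycle_quenchedCost hp0 hp1 ha)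
    (measurable_quenchedCost p a b) (quenchedCost_mem_Icc hp0 hp1 ha)
  have hlog : 0 ≤ Real.log (1 / min p (1 - p)) :=
    Real.log_nonneg (one_le_one_div (lt_min hp0 (by linarith)) ((min_le_left _ _).trans hp1.le))
  refine ⟨Λ / (2 * b), ⟨by positivity, div_le_of_le_mul₀ (by positivity) hlog (by linarith)⟩, ?_⟩
  filter_upwards [hae] with ξ hξ
  refine (hξ.div_const (2 * b)).congr fun k => ?_
  simp only [quenchedCost]
  ring

/-- If the space-time shift `T` by `(2b, 2a)` is ergodic for `P`, then there is a constant
`I ∈ [0, log(1/min(p,q))]` such that for `P`-a.e. environment `ξ`,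
`-(1/(2bk)) log q_{2bk}^0(ξ, 2ak) → I`. -/
theorem quenched_rate_exists (p : ℝ) (hp0 : 0 < p) (hp1 : p < 1)
    (a : ℤ) (b : ℕ) (hb : 1 ≤ b) (ha : |a| ≤ (b : ℤ))
    (P : Measure (ℕ → ℤ → Bool)) [IsProbabilityMeasure P]
    (hErg : Ergodic (fun ξ (k : ℕ) (y : ℤ) => ξ (k + 2 * b) (y + 2 * a)) P) :
    ∃ I ∈ Set.Icc (0 : ℝ) (Real.log (1 / min p (1 - p))),
      ∀ᵐ ξ ∂P,
        Tendsto
          (fun k : ℕ =>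
            -(1 / (2 * (b : ℝ) * k)) * Real.log (quenchedProb p ξ (2 * b * k) 0 (2 * a * k)))
          atTop (nhds I) :=
  quenched_rate_exists_general p hp0 hp1 a b ha P hErg
end

section
/- Let 0 < β < α and θ ≥ α − β. For t > 0 let P_t be the product measure on ℕ × ℕ of the Poisson distribution with mean αt and the Poisson distribution with mean βt. Then lim_{t→∞} (1/t) · log P_t( {(m, j) ∈ ℕ × ℕ : (m : ℝ) − (j : ℝ) ≥ θ·t} ) = −J(θ), where J(θ) = sup_{λ∈ℝ} [ θλ − α(e^λ − 1) − β(e^{−λ} − 1) ]. -/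
/-!
Let `l₀ ≥ 0` solve `α e^{l₀} - β e^{-l₀} = θ`; it maximizes `θ l - α (e^l - 1) - β (e^{-l} - 1)`,
so the maximum is `J(θ)`. The exponential Chebyshev (Chernoff) bound at `l₀`, with the Poisson
moment generating functions, gives `P_t(m - j ≥ θ t) ≤ e^{-t J(θ)}`. Conversely, under the tilted
rates `a = α e^{l₀}` and `b = β e^{-l₀}` the walk has drift `a - b = θ`, and the single outcome
`(⌈a t⌉, ⌊b t⌋)` already has probability `e^{-t J(θ) + o(t)}` by Stirling's formula.
-/

open MeasureTheory Filter ProbabilityTheory Real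
open scoped NNReal Nat Topology

lemma mgf_sub_prod {α β : Type*} [MeasurableSpace α] [MeasurableSpace β]
    {μ : Measure α} {ν : Measure β} [SFinite μ] [SFinite ν] (X : α → ℝ) (Y : β → ℝ) (c : ℝ) :
    mgf (fun q : α × β => X q.1 - Y q.2) (μ.prod ν) c = mgf X μ c * mgf Y ν (-c) := by
  rw [mgf, mgf, mgf, ← integral_prod_mul]
  congr with q
  rw [← exp_add]
  ring_nf

lemma measureReal_singleton_mul_le_measureReal_prod {α β : Type*} [MeasurableSpace α]
    [MeasurableSpace β] (μ : Measure α) (ν : Measure β) [IsFiniteMeasure μ] [IsFiniteMeasure ν]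
    {S : Set (α × β)} {a : α} {b : β} (h : (a, b) ∈ S) :
    μ.real {a} * ν.real {b} ≤ (μ.prod ν).real S := by
  rw [← measureReal_prod_prod, Set.singleton_prod_singleton]
  exact measureReal_mono (Set.singleton_subset_iff.2 h)

lemma tendsto_log_div_natCast_atTop :
    Tendsto (fun n : ℕ => log n / n) atTop (𝓝 0) :=
  (isLittleO_log_id_atTop.tendsto_div_nhds_zero).comp tendsto_natCast_atTop_atTop

lemma tendsto_log_factorial_sub_div :
    Tendsto (fun n : ℕ => (log n ! - (n * log n - n)) / n) atTop (𝓝 0) := by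
  have hstirling : Tendsto (fun n : ℕ => log (Stirling.stirlingSeq n) / n) atTop (𝓝 0) :=
    (Stirling.tendsto_stirlingSeq_sqrt_pi.log (by positivity)).div_atTop
      tendsto_natCast_atTop_atTop
  have hlog2 : Tendsto (fun n : ℕ => log 2 / n) atTop (𝓝 0) :=
    tendsto_const_nhds.div_atTop tendsto_natCast_atTop_atTop
  have hsum := hstirling.add ((hlog2.add tendsto_log_div_natCast_atTop).const_mul (1 / 2))
  simp only [add_zero, mul_zero] at hsum
  refine hsum.congr' ?_
  filter_upwards [eventually_ne_atTop 0] with n hn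
  have hn' : (n : ℝ) ≠ 0 := Nat.cast_ne_zero.2 hn
  -- `log n! - (n log n - n) = log (stirlingSeq n) + log (2 n) / 2`
  rw [Stirling.log_stirlingSeq_formula, log_mul two_ne_zero hn', log_div hn' (exp_ne_zero 1),
    log_exp]
  field_simp
  ring

lemma tendsto_one_div_mul_log_of_le_of_le {f g : ℝ → ℝ} {J : ℝ}
    (hlim : Tendsto (fun t => log (g t) / t) atTop (𝓝 (-J)))
    (hg : ∀ᶠ t in atTop, 0 < g t ∧ g t ≤ f t) (hf : ∀ᶠ t in atTop, f t ≤ exp (-(t * J))) :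
    Tendsto (fun t => (1 / t) * log (f t)) atTop (𝓝 (-J)) := by
  refine tendsto_of_tendsto_of_tendsto_of_le_of_le' hlim tendsto_const_nhds ?_ ?_
    <;> filter_upwards [eventually_gt_atTop 0, hg, hf] with t ht ⟨hg₀, hgf⟩ hf
  · rw [one_div_mul_eq_div]
    gcongr
  · calc (1 / t) * log (f t) ≤ (1 / t) * -(t * J) := by
          gcongr
          exact (log_le_iff_le_exp (hg₀.trans_le hgf)).2 hf
      _ = -J := by field_simp

lemma iSup_eq_of_eq_mul_exp_sub_mul_exp_neg {α β θ l₀ : ℝ} (hα : 0 ≤ α) (hβ : 0 ≤ β)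
    (hl₀ : α * exp l₀ - β * exp (-l₀) = θ) :
    ⨆ l : ℝ, (θ * l - α * (exp l - 1) - β * (exp (-l) - 1))
      = θ * l₀ - α * (exp l₀ - 1) - β * (exp (-l₀) - 1) := by
  have hle : ∀ l, θ * l - α * (exp l - 1) - β * (exp (-l) - 1)
      ≤ θ * l₀ - α * (exp l₀ - 1) - β * (exp (-l₀) - 1) := by
    intro l
    -- the gap is `α e^{l₀} (e^u - 1 - u) + β e^{-l₀} (e^{-u} - 1 + u)` with `u = l - l₀`
    have hup : exp l = exp l₀ * exp (l - l₀) := by rw [← exp_add]; ring_nf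
    have hdown : exp (-l) = exp (-l₀) * exp (l₀ - l) := by rw [← exp_add]; ring_nf
    have h₁ := mul_le_mul_of_nonneg_left (add_one_le_exp (l - l₀)) (mul_nonneg hα (exp_pos l₀).le)
    have h₂ := mul_le_mul_of_nonneg_left (add_one_le_exp (l₀ - l))
      (mul_nonneg hβ (exp_pos (-l₀)).le)
    rw [← hl₀, hup, hdown]
    linarith
  exact le_antisymm (ciSup_le hle) (le_ciSup ⟨_, Set.forall_mem_range.2 hle⟩ l₀)

lemma exists_nonneg_mul_exp_sub_mul_exp_neg_eq {α β θ : ℝ} (hα : 0 < α) (hβ : 0 ≤ β)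
    (hθ : α - β ≤ θ) : ∃ l₀, 0 ≤ l₀ ∧ α * exp l₀ - β * exp (-l₀) = θ := by
  set L := (|θ| + β) / α
  have hL : 0 ≤ L := by positivity
  have hcont : ContinuousOn (fun l => α * exp l - β * exp (-l)) (Set.Icc 0 L) := by fun_prop
  have hLval : θ ≤ α * exp L - β * exp (-L) := by
    have h₁ : α * (L + 1) ≤ α * exp L := mul_le_mul_of_nonneg_left (add_one_le_exp L) hα.le
    have h₂ : β * exp (-L) ≤ β := mul_le_of_le_one_right hβ (exp_le_one_iff.2 (by linarith))
    have h₃ : α * L = |θ| + β := mul_div_cancel₀ _ hα.ne'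
    linarith [le_abs_self θ]
  obtain ⟨l₀, hl₀, h⟩ := intermediate_value_Icc hL hcont ⟨by simpa using hθ, hLval⟩
  exact ⟨l₀, hl₀.1, h⟩

lemma hasSum_poissonMeasure_real_mul_exp (r : ℝ≥0) (c : ℝ) :
    HasSum (fun n : ℕ => exp (-r) * r ^ n / n ! * exp (c * n)) (exp (r * (exp c - 1))) := by
  have hterm : (fun n : ℕ => exp (-r) * r ^ n / n ! * exp (c * n))
      = fun n => exp (-r) * ((r * exp c) ^ n / n !) := by
    ext n
    rw [mul_pow, ← exp_nat_mul, mul_comm (n : ℝ) c]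
    ring
  have hsum : exp (r * (exp c - 1)) = exp (-r) * exp (r * exp c) := by
    rw [← exp_add]
    ring_nf
  have h := (NormedSpace.expSeries_div_hasSum_exp ((r : ℝ) * exp c)).mul_left (exp (-r))
  rw [← exp_eq_exp_ℝ] at h
  rwa [hterm, hsum]

lemma integrable_exp_mul_poissonMeasure (r : ℝ≥0) (c : ℝ) :
    Integrable (fun n : ℕ => exp (c * n)) (poissonMeasure r) := by
  refine integrable_poissonMeasure_iff.2 ?_
  simpa using (hasSum_poissonMeasure_real_mul_exp r c).summable

lemma mgf_poissonMeasure (r : ℝ≥0) (c : ℝ) :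
    mgf (fun n : ℕ => (n : ℝ)) (poissonMeasure r) c = exp (r * (exp c - 1)) := by
  rw [mgf, integral_poissonMeasure]
  exact (hasSum_poissonMeasure_real_mul_exp r c).tsum_eq

lemma measureReal_prod_poissonMeasure_sub_ge_le (r s : ℝ≥0) {c : ℝ} (hc : 0 ≤ c) (u : ℝ) :
    ((poissonMeasure r).prod (poissonMeasure s)).real {q : ℕ × ℕ | u ≤ (q.1 : ℝ) - q.2}
      ≤ exp (-c * u + r * (exp c - 1) + s * (exp (-c) - 1)) := by
  have hint : Integrable (fun q : ℕ × ℕ => exp (c * ((q.1 : ℝ) - q.2)))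
      ((poissonMeasure r).prod (poissonMeasure s)) := by
    convert (integrable_exp_mul_poissonMeasure r c).mul_prod
      (integrable_exp_mul_poissonMeasure s (-c)) using 2
    rw [← exp_add]
    ring_nf
  calc _ ≤ exp (-c * u) * mgf (fun q : ℕ × ℕ => (q.1 : ℝ) - q.2)
        ((poissonMeasure r).prod (poissonMeasure s)) c := measure_ge_le_exp_mul_mgf u hc hint
    _ = _ := by
      rw [mgf_sub_prod (fun n : ℕ => (n : ℝ)) (fun n : ℕ => (n : ℝ)), mgf_poissonMeasure,
        mgf_poissonMeasure, ← exp_add, ← exp_add, add_assoc]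

lemma tendsto_log_poissonMeasure_real_div {r a : ℝ} (hr : 0 < r) (ha : 0 < a) {k : ℝ → ℕ}
    (hk : Tendsto (fun t => (k t : ℝ) / t) atTop (𝓝 a)) :
    Tendsto (fun t => log ((poissonMeasure (r * t).toNNReal).real {k t}) / t) atTop
      (𝓝 (a * log (r / a) + a - r)) := by
  have hk_top : Tendsto k atTop atTop := by
    refine tendsto_natCast_atTop_iff.1 ((hk.pos_mul_atTop ha tendsto_id).congr' ?_)
    filter_upwards [eventually_ne_atTop 0] with t ht
    exact div_mul_cancel₀ _ ht
  have hlim := ((hk.mul ((tendsto_const_nhds.div hk ha.ne').log (div_pos hr ha).ne')).add hk).sub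
    ((tendsto_log_factorial_sub_div.comp hk_top).mul hk)
  rw [zero_mul, sub_zero] at hlim
  refine (hlim.sub_const r).congr' ?_
  filter_upwards [eventually_gt_atTop 0, hk_top.eventually_ne_atTop 0] with t ht hkt
  have hK : (k t : ℝ) ≠ 0 := Nat.cast_ne_zero.2 hkt
  have hK' : (0 : ℝ) < k t := Nat.cast_pos.2 (Nat.pos_of_ne_zero hkt)
  simp only [Function.comp_apply, Pi.div_apply]
  rw [poissonMeasure_real_singleton, Real.coe_toNNReal _ (by positivity),
    log_div (by positivity) (Nat.cast_ne_zero.2 (Nat.factorial_ne_zero _)),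
    log_mul (exp_ne_zero _) (by positivity), log_exp, log_pow, log_mul hr.ne' ht.ne',
    log_div hr.ne' (div_pos hK' ht).ne', log_div hK ht.ne']
  field_simp
  ring

lemma tendsto_log_poissonMeasure_real_mul_div_of_eq {α β θ l₀ : ℝ} (hα : 0 < α) (hβ : 0 < β)
    (hl₀ : α * exp l₀ - β * exp (-l₀) = θ) :
    Tendsto (fun t => log ((poissonMeasure (α * t).toNNReal).real {⌈α * exp l₀ * t⌉₊}
        * (poissonMeasure (β * t).toNNReal).real {⌊β * exp (-l₀) * t⌋₊}) / t) atTop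
      (𝓝 (-(θ * l₀ - α * (exp l₀ - 1) - β * (exp (-l₀) - 1)))) := by
  have ha : 0 < α * exp l₀ := by positivity
  have hb : 0 < β * exp (-l₀) := by positivity
  have hsum := (tendsto_log_poissonMeasure_real_div hα ha
    (tendsto_nat_ceil_mul_div_atTop ha.le)).add
    (tendsto_log_poissonMeasure_real_div hβ hb (tendsto_nat_floor_mul_div_atTop hb.le))
  rw [div_mul_cancel_left₀ hα.ne', div_mul_cancel_left₀ hβ.ne', log_inv, log_inv, log_exp,
    log_exp] at hsum
  convert hsum.congr' ?_ using 2
  · rw [← hl₀]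
    ring
  · filter_upwards [eventually_gt_atTop 0] with t ht
    rw [← add_div, ← log_mul (poissonMeasure_real_singleton_pos _ (by positivity)).ne'
      (poissonMeasure_real_singleton_pos _ (by positivity)).ne']

/-- Annealed large deviation upper-tail rate for the homogeneous continuous-time walk
jumping `+1` at rate `α` and `−1` at rate `β`: for `θ ≥ α − β`,
`(1/t) log P_t(m − j ≥ θt) → −J(θ)`, where `P_t` is the product of Poisson laws with
means `αt` and `βt` and `J(θ) = sup_λ [θλ − α(e^λ − 1) − β(e^{−λ} − 1)]`. -/
theorem poisson_pair_ldp_upper_tail (α β θ : ℝ) (hβ : 0 < β) (hαβ : β < α)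
    (hθ : α - β ≤ θ) :
    Tendsto
      (fun t : ℝ =>
        (1 / t) *
          Real.log
            (((poissonMeasure (α * t).toNNReal).prod (poissonMeasure (β * t).toNNReal))
              {q : ℕ × ℕ | θ * t ≤ (q.1 : ℝ) - (q.2 : ℝ)}).toReal)
      atTop
      (nhds (-(⨆ l : ℝ, (θ * l - α * (Real.exp l - 1) - β * (Real.exp (-l) - 1))))) := by
  have hα : 0 < α := hβ.trans hαβ
  obtain ⟨l₀, hl₀, hcrit⟩ := exists_nonneg_mul_exp_sub_mul_exp_neg_eq hα hβ.le hθ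
  rw [iSup_eq_of_eq_mul_exp_sub_mul_exp_neg hα.le hβ.le hcrit]
  refine tendsto_one_div_mul_log_of_le_of_le
    (tendsto_log_poissonMeasure_real_mul_div_of_eq hα hβ hcrit) ?_ ?_
  · filter_upwards [eventually_gt_atTop 0] with t ht
    refine ⟨mul_pos (poissonMeasure_real_singleton_pos _ (by positivity))
      (poissonMeasure_real_singleton_pos _ (by positivity)),
      measureReal_singleton_mul_le_measureReal_prod _ _ ?_⟩
    have hceil := Nat.le_ceil (α * exp l₀ * t)
    have hfloor := Nat.floor_le (mul_nonneg (mul_nonneg hβ.le (exp_pos (-l₀)).le) ht.le)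
    have hθt : θ * t = α * exp l₀ * t - β * exp (-l₀) * t := by rw [← hcrit, sub_mul]
    show θ * t ≤ _
    linarith
  · filter_upwards [eventually_ge_atTop 0] with t ht
    refine (measureReal_prod_poissonMeasure_sub_ge_le _ _ hl₀ (θ * t)).trans_eq ?_
    rw [Real.coe_toNNReal _ (by positivity), Real.coe_toNNReal _ (by positivity)]
    ring_nf
end
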